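/- arXiv:1403.6887 — 2 statements merged into one kernel-verified Lean document; each statement's English description precedes it below -/
import Mathlib

section
/- Let T ≥ 1, let F : {0,...,T-1} → ℝ, and define the T×T matrix C by C_{tτ} = ((τ-1)/(T(T-τ+1))) F(T-τ) if τ ≤ t and C_{tτ} = -(1/T) F(T-τ) if τ > t. Then trace(C Cᵀ) = (1/T) Σ_{k=2}^{T} F(T-k)² (k-1)/(T-k+1), which equals (1/T) Σ_{t=0}^{T-2} F(t)² (T-t-1)/(t+1). -/
open Finset Matrix

/-!
`trace (C Cᵀ)` is the sum of the squared entries of `C`. In the paper's column `k = τ + 1`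
there are `T - k + 1` entries `(k - 1) F(T - k) / (T (T - k + 1))` and `k - 1` entries
`-F(T - k) / T`, whose squares add up to `F(T - k)² (k - 1) / (T (T - k + 1))`. The first
column contributes nothing, and the second form of the sum is the substitution `t = T - k`.
-/

theorem Matrix.trace_mul_transpose_self {m n R : Type*} [Fintype m] [Fintype n] [CommSemiring R]
    (A : Matrix m n R) : (A * Aᵀ).trace = ∑ i, ∑ j, A i j ^ 2 := by
  simp only [trace, diag, mul_apply, transpose_apply, sq]

theorem Fin.sum_ite_le {M : Type*} [AddCommMonoid M] {n : ℕ} (τ : Fin n) (a b : M) :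
    ∑ t : Fin n, (if τ ≤ t then a else b) = (n - τ) • a + (τ : ℕ) • b := by
  rw [sum_ite]
  simp only [not_le, filter_le_eq_Ici, filter_gt_eq_Iio, Finset.sum_const, Fin.card_Ici,
    Fin.card_Iio]

theorem Finset.sum_range_succ_eq_sum_Icc_two {M : Type*} [AddCommMonoid M] (n : ℕ) {g : ℕ → M}
    (hg : g 1 = 0) : ∑ i ∈ range n, g (i + 1) = ∑ k ∈ Icc 2 n, g k := by
  rw [range_eq_Ico, sum_Ico_add' g, zero_add, ← Ico_add_one_right_eq_Icc]
  rcases n.eq_zero_or_pos with rfl | hn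
  · rfl
  · rw [sum_eq_sum_Ico_succ_bot (by omega), hg, zero_add]

theorem Finset.sum_Icc_two_eq_sum_range_sub {M : Type*} [AddCommMonoid M] (n : ℕ) (g : ℕ → M) :
    ∑ k ∈ Icc 2 n, g k = ∑ t ∈ range (n - 1), g (n - t) := by
  refine sum_nbij' (n - ·) (n - ·) (fun k hk => ?_) (fun t ht => ?_) (fun k hk => ?_)
    (fun t ht => ?_) (fun k hk => ?_) <;> simp only [mem_Icc, mem_range] at *
  all_goals first | omega | rw [Nat.sub_sub_self hk.2]

theorem column_sq_sum_eq {K : Type*} [Field K] {x k : K} (c : K) (hx : x ≠ 0)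
    (hk : x - k + 1 ≠ 0) :
    (x - k + 1) * ((k - 1) / (x * (x - k + 1)) * c) ^ 2 + (k - 1) * (-(1 / x) * c) ^ 2
      = 1 / x * (c ^ 2 * (k - 1) / (x - k + 1)) := by
  field_simp
  ring

theorem stmt_11_general (T : ℕ) (F : ℕ → ℝ)
    (C : Matrix (Fin T) (Fin T) ℝ)
    (hC : ∀ t τ : Fin T,
      C t τ = if (τ : ℕ) + 1 ≤ (t : ℕ) + 1
        then (((τ : ℕ) + 1 : ℝ) - 1) / ((T : ℝ) * ((T : ℝ) - ((τ : ℕ) + 1) + 1))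
              * F (T - ((τ : ℕ) + 1))
        else -(1 / (T : ℝ)) * F (T - ((τ : ℕ) + 1))) :
    (C * Cᵀ).trace
      = (1 / (T : ℝ)) * ∑ k ∈ Finset.Icc 2 T,
          F (T - k) ^ 2 * ((k : ℝ) - 1) / ((T : ℝ) - k + 1)
    ∧ (C * Cᵀ).trace
      = (1 / (T : ℝ)) * ∑ t ∈ Finset.range (T - 1),
          F t ^ 2 * ((T : ℝ) - t - 1) / ((t : ℝ) + 1) := by
  set g : ℕ → ℝ := fun k => F (T - k) ^ 2 * ((k : ℝ) - 1) / ((T : ℝ) - k + 1)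
  have hcolumn (τ : Fin T) : ∑ t, C t τ ^ 2 = 1 / (T : ℝ) * g (τ + 1) := by
    have hT : (T : ℝ) ≠ 0 := by exact_mod_cast τ.pos.ne'
    have hτ : (T : ℝ) - ((τ : ℕ) + 1) + 1 ≠ 0 := by
      have : (τ : ℝ) < T := by exact_mod_cast τ.isLt
      linarith
    simp only [hC, Nat.add_le_add_iff_right, Fin.val_fin_le, apply_ite (· ^ 2), Fin.sum_ite_le,
      nsmul_eq_mul, Nat.cast_sub τ.isLt.le, g]
    push_cast
    rw [← column_sq_sum_eq (F (T - (τ + 1))) hT hτ]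
    ring
  have htrace : (C * Cᵀ).trace = 1 / (T : ℝ) * ∑ k ∈ Icc 2 T, g k := by
    rw [trace_mul_transpose_self, sum_comm, sum_congr rfl fun τ _ => hcolumn τ, ← mul_sum,
      Fin.sum_univ_eq_sum_range (fun i => g (i + 1)),
      sum_range_succ_eq_sum_Icc_two T (by simp [g])]
  refine ⟨htrace, htrace.trans ?_⟩
  rw [sum_Icc_two_eq_sum_range_sub]
  congr 1
  refine sum_congr rfl fun t ht => ?_
  rw [mem_range] at ht
  simp only [g, Nat.sub_sub_self (by omega : t ≤ T), Nat.cast_sub (by omega : t ≤ T)]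
  ring

theorem stmt_11 (T : ℕ) (hT : 1 ≤ T) (F : ℕ → ℝ)
    (C : Matrix (Fin T) (Fin T) ℝ)
    (hC : ∀ t τ : Fin T,
      C t τ = if (τ : ℕ) + 1 ≤ (t : ℕ) + 1
        then (((τ : ℕ) + 1 : ℝ) - 1) / ((T : ℝ) * ((T : ℝ) - ((τ : ℕ) + 1) + 1))
              * F (T - ((τ : ℕ) + 1))
        else -(1 / (T : ℝ)) * F (T - ((τ : ℕ) + 1))) :
    (C * Cᵀ).trace
      = (1 / (T : ℝ)) * ∑ k ∈ Finset.Icc 2 T,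
          F (T - k) ^ 2 * ((k : ℝ) - 1) / ((T : ℝ) - k + 1)
    ∧ (C * Cᵀ).trace
      = (1 / (T : ℝ)) * ∑ t ∈ Finset.range (T - 1),
          F t ^ 2 * ((T : ℝ) - t - 1) / ((t : ℝ) + 1) :=
  stmt_11_general T F C hC
end

section
/- For any positive integer T, (1/T²) Σ_{τ=1}^{T} Σ_{s=1}^{T} (min(τ,s)-1)/(T - min(τ,s) + 1) = 1 - (1/T) Σ_{k=1}^{T} 1/k. -/
open Finset

/-! The value `k` of `min τ s` is taken by `2 (T - k) + 1` pairs in `[1, T]²`, and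
`(2 (T - k) + 1) (k - 1) / (T - k + 1) = (2k - 1) - T / (T + 1 - k)`. Summing over `k`, the odd
numbers add up to `T²` and the reciprocals `1 / (T + 1 - k)` to the harmonic number `H_T`. -/

theorem sum_Icc_sum_Icc_min {M : Type*} [AddCommMonoid M] (f : ℕ → M) (n : ℕ) :
    ∑ τ ∈ Icc 1 n, ∑ s ∈ Icc 1 n, f (min τ s) = ∑ k ∈ Icc 1 n, (2 * (n - k) + 1) • f k := by
  induction n with
  | zero => simp
  | succ n ih =>
    have row (τ : ℕ) (hτ : τ ∈ Icc 1 n) :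
        ∑ s ∈ Icc 1 (n + 1), f (min τ s) = ∑ s ∈ Icc 1 n, f (min τ s) + f τ := by
      rw [sum_Icc_succ_top (by omega), min_eq_left (by simp at hτ; omega)]
    have last_row : ∑ s ∈ Icc 1 (n + 1), f (min (n + 1) s) = ∑ s ∈ Icc 1 (n + 1), f s :=
      sum_congr rfl fun s hs => by rw [min_eq_right (by simp at hs; omega)]
    have coeff (k : ℕ) (hk : k ∈ Icc 1 n) :
        (2 * (n + 1 - k) + 1) • f k = (2 * (n - k) + 1) • f k + f k + f k := by
      rw [show 2 * (n + 1 - k) + 1 = 2 * (n - k) + 1 + 1 + 1 by simp at hk; omega, add_nsmul,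
        add_nsmul, one_nsmul]
    rw [sum_Icc_succ_top (by omega), sum_congr rfl row, last_row, sum_add_distrib, ih,
      sum_Icc_succ_top (by omega), sum_Icc_succ_top (by omega), sum_congr rfl coeff,
      sum_add_distrib, sum_add_distrib, Nat.sub_self, mul_zero, zero_add, one_nsmul]
    abel

theorem sum_Icc_one_reflect {M : Type*} [AddCommMonoid M] (f : ℕ → M) (n : ℕ) :
    ∑ k ∈ Icc 1 n, f (n + 1 - k) = ∑ k ∈ Icc 1 n, f k := by
  refine sum_nbij' (fun k => n + 1 - k) (fun k => n + 1 - k) ?_ ?_ ?_ ?_ fun _ _ => rfl <;>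
    intro k hk <;> simp only [mem_Icc] at hk ⊢ <;> omega

theorem sum_Icc_two_mul_sub_one (n : ℕ) : ∑ k ∈ Icc 1 n, (2 * (k : ℝ) - 1) = (n : ℝ) ^ 2 := by
  induction n with
  | zero => simp
  | succ n ih =>
    rw [sum_Icc_succ_top (by omega), ih]
    push_cast
    ring

theorem nsmul_sub_one_div_sub_add_one {T k : ℕ} (hkT : k ≤ T) :
    (2 * (T - k) + 1) • (((k : ℝ) - 1) / ((T : ℝ) - k + 1))
      = (2 * (k : ℝ) - 1) - T * (1 / ((T + 1 - k : ℕ) : ℝ)) := by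
  have hkT' : (k : ℝ) ≤ T := by exact_mod_cast hkT
  have hden : (T : ℝ) - k + 1 ≠ 0 := by linarith
  have hden' : (T : ℝ) + 1 - k ≠ 0 := by linarith
  rw [nsmul_eq_mul, Nat.cast_sub (by omega)]
  push_cast [Nat.cast_sub hkT]
  field_simp
  ring

theorem stmt_19 (T : ℕ) (hT : 0 < T) :
    (1 / (T : ℝ) ^ 2) * ∑ τ ∈ Finset.Icc 1 T, ∑ s ∈ Finset.Icc 1 T,
        (((min τ s : ℕ) : ℝ) - 1) / ((T : ℝ) - (min τ s : ℕ) + 1)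
    = 1 - (1 / (T : ℝ)) * ∑ k ∈ Finset.Icc 1 T, (1 : ℝ) / k := by
  rw [sum_Icc_sum_Icc_min (fun k => ((k : ℝ) - 1) / ((T : ℝ) - k + 1)),
    sum_congr rfl fun k hk => nsmul_sub_one_div_sub_add_one (mem_Icc.mp hk).2, sum_sub_distrib,
    sum_Icc_two_mul_sub_one, ← mul_sum, sum_Icc_one_reflect (fun k => 1 / (k : ℝ))]
  have : (T : ℝ) ≠ 0 := by positivity
  field_simp
end
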